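/- arXiv:2405.13385 — 3 statements merged into one kernel-verified Lean document; each statement's English description precedes it below -/
import Mathlib

section
/- For every natural number n ≥ 1, min{2⌈√n⌉ + 2, 2⌈(1+√(1+4n))/2⌉ + 1} = min{ i + j : i, j ∈ ℕ, i ≥ 2, j ≥ 2, (i−1)(j−1) ≥ n }. -/
/-!
Write `i = a + 1`, `j = b + 1`. For a fixed sum `a + b`, the product `a * b` is largest at the most
balanced split: it is at most `t * t` if `a + b = 2t` and at most `(t + 1) * t` if `a + b = 2t + 1`.
Now `⌈√n⌉` is the least `t` with `n ≤ t * t`, and `⌈(1 + √(1 + 4n)) / 2⌉` is the least `t` with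
`n ≤ t * (t - 1)`, the positive root of `t² - t = n` rounded up. Hence `2⌈√n⌉ + 2` and
`2⌈(1 + √(1 + 4n)) / 2⌉ + 1` are the least admissible values of `i + j` of each parity.
-/

theorem Nat.ceil_sqrt_le_iff (n t : ℕ) : ⌈√(n : ℝ)⌉₊ ≤ t ↔ n ≤ t * t := by
  rw [Nat.ceil_le, Real.sqrt_le_left (Nat.cast_nonneg t), ← Nat.cast_pow, Nat.cast_le, sq]

theorem Nat.ceil_half_one_add_sqrt_le_iff (n : ℕ) {t : ℕ} (ht : 0 < t) :
    ⌈(1 + √(1 + 4 * (n : ℝ))) / 2⌉₊ ≤ t ↔ n ≤ t * (t - 1) := by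
  obtain ⟨u, rfl⟩ : ∃ u, t = u + 1 := ⟨t - 1, by omega⟩
  rw [Nat.ceil_le, div_le_iff₀ two_pos, ← le_sub_iff_add_le',
    Real.sqrt_le_left (by push_cast; linarith), Nat.add_sub_cancel, ← Nat.cast_le (α := ℝ)]
  push_cast
  constructor <;> intro h <;> nlinarith

theorem Nat.mul_le_mul_self_of_add_eq {a b t : ℕ} (h : a + b = 2 * t) : a * b ≤ t * t := by
  nlinarith [sq_nonneg ((a : ℤ) - b)]

theorem Nat.mul_le_succ_mul_of_add_eq {a b t : ℕ} (h : a + b = 2 * t + 1) :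
    a * b ≤ (t + 1) * t := by
  rcases Nat.lt_or_gt_of_ne (show a ≠ b by omega) with hab | hab <;> nlinarith

theorem min_ceil_le_add_add_two_of_le_mul {n a b : ℕ} (h : n ≤ a * b) :
    min (2 * ⌈√(n : ℝ)⌉₊ + 2) (2 * ⌈(1 + √(1 + 4 * (n : ℝ))) / 2⌉₊ + 1) ≤ a + b + 2 := by
  rcases Nat.even_or_odd' (a + b) with ⟨t, hab | hab⟩
  · have hc := (Nat.ceil_sqrt_le_iff n t).2 <| h.trans <| Nat.mul_le_mul_self_of_add_eq hab
    omega
  · have hd := (Nat.ceil_half_one_add_sqrt_le_iff n t.succ_pos).2 <| by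
      simpa using h.trans (Nat.mul_le_succ_mul_of_add_eq hab)
    omega

theorem minimal_model_wedge_circles_cardinality (n : ℕ) (hn : 1 ≤ n) :
    min (2 * ⌈Real.sqrt n⌉₊ + 2) (2 * ⌈(1 + Real.sqrt (1 + 4 * n)) / 2⌉₊ + 1) =
      sInf {m : ℕ | ∃ i j : ℕ, 2 ≤ i ∧ 2 ≤ j ∧ n ≤ (i - 1) * (j - 1) ∧ m = i + j} := by
  set c := ⌈Real.sqrt n⌉₊
  set d := ⌈(1 + Real.sqrt (1 + 4 * n)) / 2⌉₊
  have hc : n ≤ c * c := (Nat.ceil_sqrt_le_iff n c).1 le_rfl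
  have hc_pos : 0 < c := Nat.ceil_pos.2 <| Real.sqrt_pos.2 <| by exact_mod_cast hn
  have hd_pos : 0 < d := Nat.ceil_pos.2 <| by positivity
  have hd : n ≤ d * (d - 1) := (Nat.ceil_half_one_add_sqrt_le_iff n hd_pos).1 le_rfl
  have hd_two : 2 ≤ d := by
    by_contra! h1
    have := (Nat.ceil_half_one_add_sqrt_le_iff n one_pos).1 (by omega)
    omega
  refine (IsLeast.csInf_eq ⟨?_, ?_⟩).symm
  · rcases min_choice (2 * c + 2) (2 * d + 1) with h | h <;> rw [h]
    · exact ⟨c + 1, c + 1, by omega, by omega, by simpa using hc, by ring⟩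
    · exact ⟨d + 1, d, by omega, hd_two, by simpa using hd, by ring⟩
  · rintro _ ⟨i, j, hi, hj, hij, rfl⟩
    have := min_ceil_le_add_add_two_of_le_mul hij
    omega
end

section
/- For every n ≥ 1, the n-fold non-Hausdorff suspension model 𝕊ⁿ(S⁰), i.e. the poset with 2n+2 elements x₀⁺, x₀⁻, x₁⁺, x₁⁻, …, xₙ⁺, xₙ⁻ where xᵢ^ε < xⱼ^δ whenever i < j (and the two elements at each level are incomparable), has height n, exactly 2 maximal and 2 minimal elements, and no beat points. -/
/-- The underlying set of the `n`-fold non-Hausdorff suspension `𝕊ⁿ(S⁰)`: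
`2n+2` points `xᵢ⁺, xᵢ⁻` for `0 ≤ i ≤ n`. -/
def SuspS0 (n : ℕ) : Type := Fin (n + 1) × Bool

/-- The order of `𝕊ⁿ(S⁰)`: `xᵢ^ε ≤ xⱼ^δ` iff they are equal or `i < j`
(the two points at each level being incomparable). -/
def suspLe (n : ℕ) (p q : SuspS0 n) : Prop := p = q ∨ p.1 < q.1

instance (n : ℕ) : DecidableEq (SuspS0 n) :=
  inferInstanceAs (DecidableEq (Fin (n + 1) × Bool))

/-- For every `n ≥ 1` the poset `𝕊ⁿ(S⁰)` on `2n+2` points has height `n`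
(its maximal chains have cardinality `n+1`), exactly two maximal and exactly two minimal
elements, and no beat points (no point has a maximum strictly below it or a minimum
strictly above it). -/
theorem suspension_model_sphere_properties (n : ℕ) (hn : 1 ≤ n) :
    (sSup {c : ℕ | ∃ s : Finset (SuspS0 n),
        IsChain (suspLe n) (s : Set (SuspS0 n)) ∧ s.card = c} = n + 1) ∧
    {x : SuspS0 n | ∀ y, suspLe n x y → y = x}.ncard = 2 ∧
    {x : SuspS0 n | ∀ y, suspLe n y x → y = x}.ncard = 2 ∧
    (∀ x : SuspS0 n,
      ¬ (∃ m, (suspLe n m x ∧ m ≠ x) ∧ ∀ y, (suspLe n y x ∧ y ≠ x) → suspLe n y m) ∧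
      ¬ (∃ m, (suspLe n x m ∧ m ≠ x) ∧ ∀ y, (suspLe n x y ∧ y ≠ x) → suspLe n m y)) := by
  refine ⟨?_, ?_, ?_, ?_⟩
  · -- height
    have hub : ∀ c ∈ {c : ℕ | ∃ s : Finset (SuspS0 n),
        IsChain (suspLe n) (s : Set (SuspS0 n)) ∧ s.card = c}, c ≤ n + 1 := by
      rintro c ⟨s, hs, rfl⟩
      have h : s.card ≤ (Finset.univ : Finset (Fin (n+1))).card := by
        apply Finset.card_le_card_of_injOn (fun p => p.1)
        · intro _ _; exact Finset.mem_univ _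
        · intro p hp q hq hpq
          by_contra hne
          rcases hs hp hq hne with h | h <;>
            rcases h with h | h <;>
            first | exact hne h | exact hne h.symm | exact absurd hpq (ne_of_lt h) |
              exact absurd hpq.symm (ne_of_lt h)
      simpa using h
    have hmem : (n + 1) ∈ {c : ℕ | ∃ s : Finset (SuspS0 n),
        IsChain (suspLe n) (s : Set (SuspS0 n)) ∧ s.card = c} := by
      refine ⟨(Finset.univ : Finset (Fin (n+1))).image (fun i => ((i, true) : SuspS0 n)), ?_, ?_⟩
      · intro p hp q hq hne
        replace hp := Finset.mem_image.mp (Finset.mem_coe.mp hp); replace hq := Finset.mem_image.mp (Finset.mem_coe.mp hq)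
        obtain ⟨i, _, rfl⟩ := hp
        obtain ⟨j, _, rfl⟩ := hq
        have hij : i ≠ j := fun h => hne (by rw [h])
        rcases lt_or_gt_of_ne hij with h | h
        · exact Or.inl (Or.inr h)
        · exact Or.inr (Or.inr h)
      · refine (Finset.card_image_of_injective _ ?_).trans ?_; rotate_left
        · simp
        · intro i j h
          exact congrArg Prod.fst h
    exact le_antisymm (csSup_le ⟨n+1, hmem⟩ hub) (le_csSup ⟨n+1, hub⟩ hmem)
  · -- maximal elements
    have hset : {x : SuspS0 n | ∀ y, suspLe n x y → y = x} =
        {((Fin.last n, true) : SuspS0 n), (Fin.last n, false)} := by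
      ext x
      constructor
      · intro hx
        have hlast : x.1 = Fin.last n := by
          by_contra h
          have hlt : x.1 < Fin.last n := lt_of_le_of_ne (Fin.le_last _) h
          have h2 := hx (Fin.last n, true) (Or.inr hlt)
          have h3 : x.1 = Fin.last n := by rw [← h2]
          exact h h3
        rcases Bool.eq_false_or_eq_true x.2 with h | h
        · left; exact Prod.ext hlast h
        · right; exact Prod.ext hlast h
      · rintro (rfl | rfl) <;>
        · rintro y (rfl | h)
          · rfl
          · exact absurd h (not_lt_of_ge (Fin.le_last _))
    rw [hset]; refine Set.ncard_pair ?_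
    intro h
    have h2 : (true : Bool) = false := congrArg Prod.snd h
    exact Bool.noConfusion h2
  · -- minimal elements
    have hset : {x : SuspS0 n | ∀ y, suspLe n y x → y = x} =
        {(((0 : Fin (n+1)), true) : SuspS0 n), ((0 : Fin (n+1)), false)} := by
      ext x
      constructor
      · intro hx
        have h0 : x.1 = 0 := by
          by_contra h
          have hlt : (0 : Fin (n+1)) < x.1 := Fin.pos_iff_ne_zero.mpr h
          have h2 := hx ((0 : Fin (n+1)), true) (Or.inr hlt)
          have h3 : x.1 = 0 := by rw [← h2]
          exact h h3
        rcases Bool.eq_false_or_eq_true x.2 with h | h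
        · left; exact Prod.ext h0 h
        · right; exact Prod.ext h0 h
      · rintro (rfl | rfl) <;>
        · rintro y (rfl | h)
          · rfl
          · exact absurd h (Fin.not_lt_zero _)
    rw [hset]; refine Set.ncard_pair ?_
    intro h
    have h2 : (true : Bool) = false := congrArg Prod.snd h
    exact Bool.noConfusion h2
  · -- no beat points
    intro x
    constructor
    · rintro ⟨m, ⟨hmx, hmne⟩, hmin⟩
      have hm1 : m.1 < x.1 := by
        rcases hmx with h | h
        · exact absurd h hmne
        · exact h
      have h1 := hmin (m.1, true) ⟨Or.inr hm1, fun h => (ne_of_lt hm1) (by rw [← h])⟩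
      have h2 := hmin (m.1, false) ⟨Or.inr hm1, fun h => (ne_of_lt hm1) (by rw [← h])⟩
      rcases h1 with h1 | h1
      · rcases h2 with h2 | h2
        · have e1 : m.2 = true := by rw [← h1]
          have e2 : m.2 = false := by rw [← h2]
          rw [e1] at e2; exact Bool.noConfusion e2
        · exact absurd h2 (lt_irrefl _)
      · exact absurd h1 (lt_irrefl _)
    · rintro ⟨m, ⟨hxm, hmne⟩, hmin⟩
      have hm1 : x.1 < m.1 := by
        rcases hxm with h | h
        · exact absurd h.symm hmne
        · exact h
      have h1 := hmin (m.1, true) ⟨Or.inr hm1, fun h => (ne_of_lt hm1) (by rw [← h])⟩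
      have h2 := hmin (m.1, false) ⟨Or.inr hm1, fun h => (ne_of_lt hm1) (by rw [← h])⟩
      rcases h1 with h1 | h1
      · rcases h2 with h2 | h2
        · have e1 : m.2 = true := by rw [h1]
          have e2 : m.2 = false := by rw [h2]
          rw [e1] at e2; exact Bool.noConfusion e2
        · exact absurd h2 (lt_irrefl _)
      · exact absurd h1 (lt_irrefl _)
end

section
/- Let X be the 8-element poset with minimal elements c₁,c₂, middle elements b₁,b₂,b₃,b₄, and maximal elements a₁,a₂, where cᵢ < bⱼ and bⱼ < aₖ for all i,k ∈ {1,2} and j ∈ {1,2,3,4}. Then X has no beat points, has height 2, and its order complex has Euler characteristic 8 − (4·2 + 4·2 + 2·2) + (2·4·2) = 4. -/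
/-- Level function for the 8-element poset: `c₁=0, c₂=1` (level 0), `b₁,…,b₄ = 2,…,5`
(level 1), `a₁=6, a₂=7` (level 2). -/
def level18 : Fin 8 → ℕ := ![0, 0, 1, 1, 1, 1, 2, 2]

/-- The strict order: every element lies below every element of any higher level
(`cᵢ < bⱼ < aₖ` for all `i, k ∈ {1,2}`, `j ∈ {1,2,3,4}`). -/
def lt18 (x y : Fin 8) : Prop := level18 x < level18 y

instance (x y : Fin 8) : Decidable (lt18 x y) := by
  unfold lt18; infer_instance

/-- The associated partial order. -/
def le18 (x y : Fin 8) : Prop := x = y ∨ lt18 x y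

/-!
Every relation in the poset goes strictly up one of the three levels `c, b, a`, and every level
has at least two elements. So no element has a unique maximal lower cover or minimal upper
cover (no beat points), a chain meets each level at most once (height 2, attained by `c₁ < b₁ < a₁`),
and the edge and triangle counts are `4·2 + 4·2 + 2·2 = 20` and `2·4·2 = 16`.
-/

instance (x y : Fin 8) : Decidable (le18 x y) := by
  unfold le18; infer_instance

theorem IsChain.card_le_card_of_mapsTo {α β : Type*} {r : α → α → Prop} {f : α → β}
    (hf : ∀ ⦃x y⦄, r x y → x ≠ y → f x ≠ f y) {s : Finset α} (hs : IsChain r (s : Set α))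
    {t : Finset β} (hst : Set.MapsTo f s t) : s.card ≤ t.card := by
  refine Finset.card_le_card_of_injOn f hst fun x hx y hy hxy => ?_
  by_contra hne
  rcases hs hx hy hne with hxy' | hyx
  · exact hf hxy' hne hxy
  · exact hf hyx (Ne.symm hne) hxy.symm

lemma level18_ne_of_le18 {x y : Fin 8} (h : le18 x y) (hne : x ≠ y) : level18 x ≠ level18 y :=
  (h.resolve_left hne).ne

lemma level18_mem_range (x : Fin 8) : level18 x ∈ Finset.range 3 := by
  fin_cases x <;> decide

lemma card_le_three_of_isChain_le18 {s : Finset (Fin 8)} (hs : IsChain le18 (s : Set (Fin 8))) :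
    s.card ≤ 3 :=
  hs.card_le_card_of_mapsTo (fun _ _ => level18_ne_of_le18)
    (fun x _ => level18_mem_range x) |>.trans_eq (Finset.card_range 3)

lemma isChain_le18_c₁_b₁_a₁ : IsChain le18 (({0, 2, 6} : Finset (Fin 8)) : Set (Fin 8)) := by
  intro x hx y hy _
  simp only [Finset.coe_insert, Finset.coe_singleton, Set.mem_insert_iff,
    Set.mem_singleton_iff] at hx hy
  rcases hx with rfl | rfl | rfl <;> rcases hy with rfl | rfl | rfl <;> decide

lemma isGreatest_card_isChain_le18 :
    IsGreatest {c : ℕ | ∃ s : Finset (Fin 8), IsChain le18 (s : Set (Fin 8)) ∧ s.card = c} 3 :=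
  ⟨⟨{0, 2, 6}, isChain_le18_c₁_b₁_a₁, rfl⟩, by
    rintro c ⟨s, hs, rfl⟩
    exact card_le_three_of_isChain_le18 hs⟩

set_option maxRecDepth 10000 in
/-- This 8-point poset (a minimal finite model of `S² ∨ S² ∨ S²`) has no beat points,
has height 2 (maximal chains have cardinality 3), and its order complex has Euler
characteristic `8 - 20 + 16 = 4` (20 edges = comparable pairs, 16 triangles = 3-chains). -/
theorem eight_point_model_no_beat_points_height_euler :
    (∀ x : Fin 8,
      ¬ (∃ m, lt18 m x ∧ ∀ y, lt18 y x → le18 y m) ∧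
      ¬ (∃ m, lt18 x m ∧ ∀ y, lt18 x y → le18 m y)) ∧
    (sSup {c : ℕ | ∃ s : Finset (Fin 8),
        IsChain le18 (s : Set (Fin 8)) ∧ s.card = c} = 3) ∧
    ((Finset.univ : Finset (Fin 8 × Fin 8)).filter (fun p => lt18 p.1 p.2)).card = 20 ∧
    ((Finset.univ : Finset (Fin 8 × Fin 8 × Fin 8)).filter
      (fun t => lt18 t.1 t.2.1 ∧ lt18 t.2.1 t.2.2)).card = 16 ∧
    (8 : ℤ) - 20 + 16 = 4 := by
  refine ⟨?_, isGreatest_card_isChain_le18.csSup_eq, ?_, ?_, by norm_num⟩ <;> decide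
end
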